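/- For all even n ≥ 4 the graph Γ_n({2}, {2}, {0, 1}) is non-planar. -/
import Mathlib


/-- The circulant graph `circ_n(S)`: vertices `ZMod n`, with `i` adjacent to `i + s` for `s ∈ S`. -/
def circGraph (n : ℕ) (S : Finset ℕ) : SimpleGraph (ZMod n) :=
  SimpleGraph.fromRel (fun i j => ∃ s ∈ S, j = i + (s : ZMod n))

/-- The graph `Γ_n(A,B,Q)` with vertices `v_i = Sum.inl i`, `v'_i = Sum.inr i`, and edges
`(v_i, v_{i+a})` for `a ∈ A`, `(v'_i, v'_{i+b})` for `b ∈ B`, `(v_i, v'_{i+q})` for `q ∈ Q`. -/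
def Gamma (n : ℕ) (A B Q : Finset ℕ) : SimpleGraph (ZMod n ⊕ ZMod n) :=
  SimpleGraph.fromRel (fun x y =>
    match x, y with
    | Sum.inl i, Sum.inl j => ∃ a ∈ A, j = i + (a : ZMod n)
    | Sum.inr i, Sum.inr j => ∃ b ∈ B, j = i + (b : ZMod n)
    | Sum.inl i, Sum.inr j => ∃ q ∈ Q, j = i + (q : ZMod n)
    | Sum.inr _, Sum.inl _ => False)

/-- `H` is a minor of `G`: there are disjoint connected branch sets in `G`, one for each
vertex of `H`, such that adjacent vertices of `H` have adjacent branch sets. -/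
def SimpleGraph.IsMinorOf {W V : Type*} (H : SimpleGraph W) (G : SimpleGraph V) : Prop :=
  ∃ f : V → Option W,
    (∀ w : W, (G.induce {v | f v = some w}).Connected) ∧
    (∀ w₁ w₂ : W, H.Adj w₁ w₂ →
      ∃ v₁ v₂, f v₁ = some w₁ ∧ f v₂ = some w₂ ∧ G.Adj v₁ v₂)

/-- A graph is planar iff it has no `K₅` minor and no `K_{3,3}` minor (Wagner's theorem). -/
def SimpleGraph.Planar {V : Type*} (G : SimpleGraph V) : Prop :=
  ¬ (⊤ : SimpleGraph (Fin 5)).IsMinorOf G ∧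
  ¬ (completeBipartiteGraph (Fin 3) (Fin 3)).IsMinorOf G

/-- `Γ_n(A,B,Q)` is properly given: `a₁ ≢ ±a₂ (mod n)` for distinct `a₁, a₂ ∈ A`,
and similarly for `B`. -/
def ProperlyGiven (n : ℕ) (A B : Finset ℕ) : Prop :=
  (∀ a₁ ∈ A, ∀ a₂ ∈ A, a₁ ≠ a₂ →
    (a₁ : ZMod n) ≠ (a₂ : ZMod n) ∧ (a₁ : ZMod n) ≠ -(a₂ : ZMod n)) ∧
  (∀ b₁ ∈ B, ∀ b₂ ∈ B, b₁ ≠ b₂ →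
    (b₁ : ZMod n) ≠ (b₂ : ZMod n) ∧ (b₁ : ZMod n) ≠ -(b₂ : ZMod n))

/-- `circ_n(S)` is properly given: `s ≢ ±t (mod n)` for distinct `s, t ∈ S`. -/
def ProperlyGivenS (n : ℕ) (S : Finset ℕ) : Prop :=
  ∀ s ∈ S, ∀ t ∈ S, s ≠ t →
    (s : ZMod n) ≠ (t : ZMod n) ∧ (s : ZMod n) ≠ -(t : ZMod n)

/-- A permutation is regular of order `n`: all its cycles have length exactly `n`
(for `n = 1` this means the identity). -/
def IsRegularOfOrder {α : Type*} (f : Equiv.Perm α) (n : ℕ) : Prop :=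
  f ^ n = 1 ∧ ∀ x : α, ∀ k : ℕ, 0 < k → k < n → (f ^ k) x ≠ x

section helpers
variable {n : ℕ}

lemma two_ne_zero'' (hn : 4 ≤ n) : (2 : ZMod n) ≠ 0 := by
  haveI : NeZero n := ⟨by omega⟩
  intro h
  have h2 : ((2:ℕ) : ZMod n) = 0 := by exact_mod_cast h
  rw [ZMod.natCast_eq_zero_iff] at h2
  have := Nat.le_of_dvd (by norm_num) h2
  omega

lemma gadj_ll (hn : 4 ≤ n) (i : ZMod n) :
    (Gamma n {2} {2} {0,1}).Adj (Sum.inl i) (Sum.inl (i + 2)) := by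
  rw [Gamma, SimpleGraph.fromRel_adj]
  refine ⟨?_, Or.inl ?_⟩
  · simp only [ne_eq, Sum.inl.injEq]
    intro h
    exact two_ne_zero'' hn (left_eq_add.mp h)
  · exact ⟨2, by simp, by norm_num⟩

lemma gadj_rr (hn : 4 ≤ n) (i : ZMod n) :
    (Gamma n {2} {2} {0,1}).Adj (Sum.inr i) (Sum.inr (i + 2)) := by
  rw [Gamma, SimpleGraph.fromRel_adj]
  refine ⟨?_, Or.inl ?_⟩
  · simp only [ne_eq, Sum.inr.injEq]
    intro h
    exact two_ne_zero'' hn (left_eq_add.mp h)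
  · exact ⟨2, by simp, by norm_num⟩

lemma gadj_lr0 (i : ZMod n) :
    (Gamma n {2} {2} {0,1}).Adj (Sum.inl i) (Sum.inr i) := by
  rw [Gamma, SimpleGraph.fromRel_adj]
  exact ⟨by simp, Or.inl ⟨0, by simp, by norm_num⟩⟩

lemma gadj_lr1 (i : ZMod n) :
    (Gamma n {2} {2} {0,1}).Adj (Sum.inl i) (Sum.inr (i + 1)) := by
  rw [Gamma, SimpleGraph.fromRel_adj]
  exact ⟨by simp, Or.inl ⟨1, by simp, by norm_num⟩⟩

lemma ind_conn_single {V : Type*} (G : SimpleGraph V) (S : Set V) (x : V)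
    (hx : x ∈ S) (h : ∀ y ∈ S, y = x) : (G.induce S).Connected := by
  rw [SimpleGraph.connected_iff]
  refine ⟨?_, ⟨⟨x, hx⟩⟩⟩
  rintro ⟨a, ha⟩ ⟨b, hb⟩
  have hab : a = b := (h a ha).trans (h b hb).symm
  subst hab
  rfl

lemma ind_conn_pair {V : Type*} (G : SimpleGraph V) (S : Set V) (x y : V)
    (hx : x ∈ S) (hy : y ∈ S) (hadj : G.Adj x y) (h : ∀ z ∈ S, z = x ∨ z = y) :
    (G.induce S).Connected := by
  rw [SimpleGraph.connected_iff]
  refine ⟨?_, ⟨⟨x, hx⟩⟩⟩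
  have key : ∀ z, ∀ hz : z ∈ S, (G.induce S).Reachable ⟨z, hz⟩ ⟨x, hx⟩ := by
    intro z hz
    rcases h z hz with rfl | rfl
    · rfl
    · exact SimpleGraph.Adj.reachable (by exact hadj.symm)
  rintro ⟨a, ha⟩ ⟨b, hb⟩
  exact (key a ha).trans (key b hb).symm

end helpers

/-- the branch-set assignment -/
def myf (n : ℕ) : ZMod n ⊕ ZMod n → Option (Fin 3 ⊕ Fin 3)
  | Sum.inl i =>
      if i.val = 0 then some (Sum.inl 0)
      else if i.val = 1 then some (Sum.inl 1)
      else if i.val = 2 then some (Sum.inr 2)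
      else if Odd i.val then some (Sum.inl 2) else none
  | Sum.inr i =>
      if i.val = 0 then some (Sum.inr 0)
      else if i.val = 1 then some (Sum.inr 1)
      else if i.val = 2 then some (Sum.inl 1)
      else if i.val = 3 then some (Sum.inl 2) else none

theorem gamma_k33_minor (n : ℕ) (hn : 4 ≤ n) (he : Even n) :
    (completeBipartiteGraph (Fin 3) (Fin 3)).IsMinorOf (Gamma n {2} {2} {0, 1}) := by
  haveI : NeZero n := ⟨by omega⟩
  set G := Gamma n {2} {2} {0,1} with hG
  -- values
  have hval : ∀ k : ℕ, k < n → ((k : ZMod n)).val = k := fun k hk => ZMod.val_cast_of_lt hk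
  have hcast : ∀ i : ZMod n, ((i.val : ℕ) : ZMod n) = i := fun i => ZMod.natCast_rightInverse i
  refine ⟨myf n, ?_, ?_⟩
  · intro w
    have hmem : ∀ i : ZMod n, ∃ m, m < n ∧ i = ((m:ℕ):ZMod n) :=
      fun i => ⟨i.val, ZMod.val_lt i, (hcast i).symm⟩
    rcases w with a | a <;> fin_cases a
    · -- inl 0 : {v_0}
      apply ind_conn_single (x := Sum.inl ((0:ℕ):ZMod n))
      · show myf n _ = _
        simp only [myf, hval 0 (by omega)]; norm_num; try rfl
      · rintro (i|i) hy <;> obtain ⟨m, hmlt, rfl⟩ := hmem i <;>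
          simp only [Set.mem_setOf_eq, myf, hval m hmlt] at hy <;>
          split_ifs at hy <;> first
            | exact absurd hy (by decide)
            | (rename_i h; subst h; rfl)
    · -- inl 1 : {v_1, w_2}
      apply ind_conn_pair (x := Sum.inl ((1:ℕ):ZMod n)) (y := Sum.inr ((2:ℕ):ZMod n))
      · show myf n _ = _
        simp only [myf, hval 1 (by omega)]; norm_num; try rfl
      · show myf n _ = _
        simp only [myf, hval 2 (by omega)]; norm_num; try rfl
      · have := gadj_lr1 (n := n) ((1:ℕ):ZMod n)
        have e : ((1:ℕ):ZMod n) + 1 = ((2:ℕ):ZMod n) := by push_cast; ring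
        rwa [e] at this
      · rintro (i|i) hy <;> obtain ⟨m, hmlt, rfl⟩ := hmem i <;>
          simp only [Set.mem_setOf_eq, myf, hval m hmlt] at hy <;>
          split_ifs at hy <;> first
            | exact absurd hy (by decide)
            | (rename_i h; subst h; left; rfl)
            | (rename_i h; subst h; right; rfl)
    · -- inl 2 : the long set
      set S : Set (ZMod n ⊕ ZMod n) := {v | myf n v = some (Sum.inl 2)} with hS
      have hb : Sum.inr ((3:ℕ):ZMod n) ∈ S := by
        show myf n _ = _
        simp only [myf, hval 3 (by omega)]; norm_num; try rfl
      have hmemv : ∀ m, Odd m → 3 ≤ m → m < n → Sum.inl ((m:ℕ):ZMod n) ∈ S := by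
        intro m hodd h3 hlt
        show myf n _ = _
        simp only [myf, hval m hlt]
        rw [if_neg (by omega), if_neg (by omega), if_neg (by omega), if_pos hodd]
      have key : ∀ m, Odd m → 3 ≤ m → m < n → ∀ hm : Sum.inl ((m:ℕ):ZMod n) ∈ S,
          (G.induce S).Reachable ⟨Sum.inl ((m:ℕ):ZMod n), hm⟩ ⟨Sum.inr ((3:ℕ):ZMod n), hb⟩ := by
        intro m
        induction m using Nat.strong_induction_on with
        | _ m ih =>
          intro hodd h3 hlt hm
          rcases eq_or_lt_of_le h3 with h | h
          · subst h
            exact SimpleGraph.Adj.reachable (by exact gadj_lr0 _)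
          · have h5 : 5 ≤ m := by
              rcases hodd with ⟨k, hk⟩; omega
            have hodd2 : Odd (m-2) := by
              rcases hodd with ⟨k, hk⟩; exact ⟨k-1, by omega⟩
            have hm2 : Sum.inl ((m-2:ℕ):ZMod n) ∈ S := hmemv _ hodd2 (by omega) (by omega)
            have hadj : G.Adj (Sum.inl ((m:ℕ):ZMod n)) (Sum.inl ((m-2:ℕ):ZMod n)) := by
              have := gadj_ll hn ((m-2:ℕ):ZMod n)
              have e : ((m-2:ℕ):ZMod n) + 2 = ((m:ℕ):ZMod n) := by
                have : (((m-2:ℕ) + 2 : ℕ) : ZMod n) = ((m:ℕ) : ZMod n) := by congr 1; omega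
                push_cast at this ⊢
                linear_combination this
              rw [e] at this
              exact this.symm
            exact (SimpleGraph.Adj.reachable (by exact hadj)).trans
              (ih (m-2) (by omega) hodd2 (by omega) (by omega) hm2)
      rw [SimpleGraph.connected_iff]
      refine ⟨?_, ⟨⟨_, hb⟩⟩⟩
      have reach : ∀ z, ∀ hz : z ∈ S,
          (G.induce S).Reachable ⟨z, hz⟩ ⟨Sum.inr ((3:ℕ):ZMod n), hb⟩ := by
        rintro (i|i) hz <;> obtain ⟨m, hmlt, rfl⟩ := hmem i
        · have hz' := hz
          simp only [hS, Set.mem_setOf_eq, myf, hval m hmlt] at hz'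
          split_ifs at hz' with h1 h2 h3 h4
          · exact absurd hz' (by decide)
          · exact absurd hz' (by decide)
          · exact absurd hz' (by decide)
          · exact key m h4 (by rcases h4 with ⟨k,hk⟩; omega) hmlt hz
        · have hz' := hz
          simp only [hS, Set.mem_setOf_eq, myf, hval m hmlt] at hz'
          split_ifs at hz' with h1 h2 h3 h4
          · exact absurd hz' (by decide)
          · exact absurd hz' (by decide)
          · exact absurd hz' (by decide)
          · subst h4; rfl
      rintro ⟨a, ha⟩ ⟨b, hb'⟩
      exact (reach a ha).trans (reach b hb').symm
    · -- inr 0 : {w_0}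
      apply ind_conn_single (x := Sum.inr ((0:ℕ):ZMod n))
      · show myf n _ = _
        simp only [myf, hval 0 (by omega)]; norm_num; try rfl
      · rintro (i|i) hy <;> obtain ⟨m, hmlt, rfl⟩ := hmem i <;>
          simp only [Set.mem_setOf_eq, myf, hval m hmlt] at hy <;>
          split_ifs at hy <;> first
            | exact absurd hy (by decide)
            | (rename_i h; subst h; rfl)
    · -- inr 1 : {w_1}
      apply ind_conn_single (x := Sum.inr ((1:ℕ):ZMod n))
      · show myf n _ = _
        simp only [myf, hval 1 (by omega)]; norm_num; try rfl
      · rintro (i|i) hy <;> obtain ⟨m, hmlt, rfl⟩ := hmem i <;>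
          simp only [Set.mem_setOf_eq, myf, hval m hmlt] at hy <;>
          split_ifs at hy <;> first
            | exact absurd hy (by decide)
            | (rename_i h; subst h; rfl)
    · -- inr 2 : {v_2}
      apply ind_conn_single (x := Sum.inl ((2:ℕ):ZMod n))
      · show myf n _ = _
        simp only [myf, hval 2 (by omega)]; norm_num; try rfl
      · rintro (i|i) hy <;> obtain ⟨m, hmlt, rfl⟩ := hmem i <;>
          simp only [Set.mem_setOf_eq, myf, hval m hmlt] at hy <;>
          split_ifs at hy <;> first
            | exact absurd hy (by decide)
            | (rename_i h; subst h; rfl)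
  · -- adjacency
    have key : ∀ a b : Fin 3, ∃ v₁ v₂, myf n v₁ = some (Sum.inl a) ∧
        myf n v₂ = some (Sum.inr b) ∧ G.Adj v₁ v₂ := by
      intro a b
      fin_cases a <;> fin_cases b
      · -- (0,0) : v_0 ~ w_0
        exact ⟨Sum.inl ((0:ℕ):ZMod n), Sum.inr ((0:ℕ):ZMod n),
          by simp only [myf, hval 0 (by omega)]; norm_num; try rfl,
          by simp only [myf, hval 0 (by omega)]; norm_num; try rfl,
          by have := gadj_lr0 (n := n) ((0:ℕ):ZMod n); simpa using this⟩
      · -- (0,1) : v_0 ~ w_1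
        refine ⟨Sum.inl ((0:ℕ):ZMod n), Sum.inr ((1:ℕ):ZMod n),
          by simp only [myf, hval 0 (by omega)]; norm_num; try rfl,
          by simp only [myf, hval 1 (by omega)]; norm_num; try rfl, ?_⟩
        have := gadj_lr1 (n := n) ((0:ℕ):ZMod n)
        have e : ((0:ℕ):ZMod n) + 1 = ((1:ℕ):ZMod n) := by push_cast; ring
        rwa [e] at this
      · -- (0,2) : v_0 ~ v_2
        refine ⟨Sum.inl ((0:ℕ):ZMod n), Sum.inl ((2:ℕ):ZMod n),
          by simp only [myf, hval 0 (by omega)]; norm_num; try rfl,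
          by simp only [myf, hval 2 (by omega)]; norm_num; try rfl, ?_⟩
        have := gadj_ll hn ((0:ℕ):ZMod n)
        have e : ((0:ℕ):ZMod n) + 2 = ((2:ℕ):ZMod n) := by push_cast; ring
        rwa [e] at this
      · -- (1,0) : w_2 ~ w_0
        refine ⟨Sum.inr ((2:ℕ):ZMod n), Sum.inr ((0:ℕ):ZMod n),
          by simp only [myf, hval 2 (by omega)]; norm_num; try rfl,
          by simp only [myf, hval 0 (by omega)]; norm_num; try rfl, ?_⟩
        have := gadj_rr hn ((0:ℕ):ZMod n)
        have e : ((0:ℕ):ZMod n) + 2 = ((2:ℕ):ZMod n) := by push_cast; ring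
        rw [e] at this
        exact this.symm
      · -- (1,1) : v_1 ~ w_1
        exact ⟨Sum.inl ((1:ℕ):ZMod n), Sum.inr ((1:ℕ):ZMod n),
          by simp only [myf, hval 1 (by omega)]; norm_num; try rfl,
          by simp only [myf, hval 1 (by omega)]; norm_num; try rfl,
          gadj_lr0 ((1:ℕ):ZMod n)⟩
      · -- (1,2) : w_2 ~ v_2
        exact ⟨Sum.inr ((2:ℕ):ZMod n), Sum.inl ((2:ℕ):ZMod n),
          by simp only [myf, hval 2 (by omega)]; norm_num; try rfl,
          by simp only [myf, hval 2 (by omega)]; norm_num; try rfl,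
          (gadj_lr0 ((2:ℕ):ZMod n)).symm⟩
      · -- (2,0) : v_{n-1} ~ w_0
        refine ⟨Sum.inl ((n-1:ℕ):ZMod n), Sum.inr ((0:ℕ):ZMod n),
          ?_, by simp only [myf, hval 0 (by omega)]; norm_num; try rfl, ?_⟩
        · have hv : (((n-1:ℕ):ZMod n)).val = n - 1 := hval _ (by omega)
          have hodd : Odd (n - 1) := by
            rcases he with ⟨k, hk⟩
            exact ⟨k - 1, by omega⟩
          simp only [myf, hv]
          rw [if_neg (by omega), if_neg (by omega), if_neg (by omega), if_pos hodd]
          rfl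
        · have := gadj_lr1 (n := n) ((n-1:ℕ):ZMod n)
          have e : ((n-1:ℕ):ZMod n) + 1 = ((0:ℕ):ZMod n) := by
            have : (((n-1:ℕ) + 1 : ℕ) : ZMod n) = ((n:ℕ) : ZMod n) := by
              congr 1; omega
            push_cast at this ⊢
            rw [this, ZMod.natCast_self]
          rwa [e] at this
      · -- (2,1) : w_3 ~ w_1
        refine ⟨Sum.inr ((3:ℕ):ZMod n), Sum.inr ((1:ℕ):ZMod n),
          by simp only [myf, hval 3 (by omega)]; norm_num; try rfl,
          by simp only [myf, hval 1 (by omega)]; norm_num; try rfl, ?_⟩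
        have := gadj_rr hn ((1:ℕ):ZMod n)
        have e : ((1:ℕ):ZMod n) + 2 = ((3:ℕ):ZMod n) := by push_cast; ring
        rw [e] at this
        exact this.symm
      · -- (2,2) : w_3 ~ v_2
        refine ⟨Sum.inr ((3:ℕ):ZMod n), Sum.inl ((2:ℕ):ZMod n),
          by simp only [myf, hval 3 (by omega)]; norm_num; try rfl,
          by simp only [myf, hval 2 (by omega)]; norm_num; try rfl, ?_⟩
        have := gadj_lr1 (n := n) ((2:ℕ):ZMod n)
        have e : ((2:ℕ):ZMod n) + 1 = ((3:ℕ):ZMod n) := by push_cast; ring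
        rw [e] at this
        exact this.symm
    intro w₁ w₂ hadj
    rcases w₁ with a | a <;> rcases w₂ with b | b
    · simp [completeBipartiteGraph] at hadj
    · obtain ⟨v₁, v₂, h1, h2, h3⟩ := key a b
      exact ⟨v₁, v₂, h1, h2, h3⟩
    · obtain ⟨v₁, v₂, h1, h2, h3⟩ := key b a
      exact ⟨v₂, v₁, h2, h1, h3.symm⟩
    · simp [completeBipartiteGraph] at hadj

theorem stmt5 (n : ℕ) (hn : 4 ≤ n) (he : Even n) :
    ¬ (Gamma n {2} {2} {0, 1}).Planar := by
  intro hP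
  exact hP.2 (gamma_k33_minor n hn he)
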